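/- The pair (Z, L) = (X† X, 0) is an optimal solution simultaneously to the original LatLRR problem (minimize rank(Z) + rank(L) subject to X = X Z + L X) and to the heuristic LatLRR problem (minimize ‖Z‖_* + ‖L‖_* subject to X = X Z + L X); moreover X† X is the unique optimal solution of the heuristic LRR problem (minimize ‖Z‖_* subject to X = X Z). Hence the solution set of LatLRR contains that of LRR in both the rank and nuclear norm formulations. -/

import Mathlib

/-!
For a Moore–Penrose inverse `P` of `X`, both `P * X` and `X * P` are orthogonal projections. If
`X = X Z + L X` then `tr (P X) = tr ((P X) Z) + tr ((X P) L)`, and for an orthogonal projection `Q`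
one has `tr (Q A) ≤ ‖A‖_*`: evaluate the trace in an orthonormal basis `vᵢ` of right singular
vectors of `A`, where `⟪vᵢ, Q A vᵢ⟫ ≤ ‖Q A vᵢ‖ ≤ ‖A vᵢ‖ = σᵢ`. Equality forces `Q A vᵢ = A vᵢ` for
every `i`, i.e. `Q A = A`, which gives uniqueness for LRR. Since `‖P X‖_* = tr (P X)`, this makes
`(P X, 0)` optimal; the rank statement is subadditivity of the rank, `rank X ≤ rank Z + rank L`.
-/

open Matrix

/-- The nuclear norm of a real matrix: the sum of its singular values,
i.e. the sum of the square roots of the eigenvalues of `Aᵀ * A`. -/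
noncomputable def nuclearNorm {m n : Type*} [Fintype m] [Fintype n] [DecidableEq n]
    (A : Matrix m n ℝ) : ℝ :=
  ∑ i, Real.sqrt (((by simpa using Matrix.isHermitian_conjTranspose_mul_self A :
    (Aᵀ * A).IsHermitian)).eigenvalues i)

/-- `P` is the Moore–Penrose pseudo-inverse of `X`. -/
def IsMoorePenroseInv {m n : Type*} [Fintype m] [Fintype n]
    (X : Matrix m n ℝ) (P : Matrix n m ℝ) : Prop :=
  X * P * X = X ∧ P * X * P = P ∧ (X * P)ᵀ = X * P ∧ (P * X)ᵀ = P * X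

/-- `(U, σ, V)` is a skinny SVD of `X`: `U` and `V` have orthonormal columns,
`σ` lists the (positive) nonzero singular values, `X = U * diagonal σ * Vᵀ`,
and the number of columns of `U` and `V` is `rank X`. -/
def IsSkinnySVD {m n r : ℕ} (X : Matrix (Fin m) (Fin n) ℝ)
    (U : Matrix (Fin m) (Fin r) ℝ) (σ : Fin r → ℝ) (V : Matrix (Fin n) (Fin r) ℝ) : Prop :=
  Uᵀ * U = 1 ∧ Vᵀ * V = 1 ∧ (∀ i, 0 < σ i) ∧
    X = U * Matrix.diagonal σ * Vᵀ ∧ r = X.rank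

open scoped InnerProductSpace

namespace Matrix

theorem rank_add_le {m n K : Type*} [Fintype n] [Field K] (A B : Matrix m n K) :
    (A + B).rank ≤ A.rank + B.rank := by
  rw [rank, mulVecLin_add]
  exact (Submodule.finrank_mono (LinearMap.range_add_le _ _)).trans
    (Submodule.finrank_add_le_finrank_add_finrank _ _)

theorem rank_le_add_of_eq_mul_add_mul {m n K : Type*} [Fintype m] [Fintype n] [Field K]
    {X : Matrix m n K} {Z : Matrix n n K} {L : Matrix m m K} (h : X = X * Z + L * X) :
    X.rank ≤ Z.rank + L.rank :=
  calc X.rank = (X * Z + L * X).rank := by rw [← h]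
    _ ≤ (X * Z).rank + (L * X).rank := rank_add_le _ _
    _ ≤ Z.rank + L.rank := add_le_add (rank_mul_le_right X Z) (rank_mul_le_left L X)

theorem trace_eq_sum_inner_toEuclideanLin {𝕜 k ι : Type*} [RCLike 𝕜] [Fintype k] [DecidableEq k]
    [Fintype ι] (M : Matrix k k 𝕜) (b : OrthonormalBasis ι 𝕜 (EuclideanSpace 𝕜 k)) :
    M.trace = ∑ i, ⟪b i, toEuclideanLin M (b i)⟫_𝕜 := by
  rw [← LinearMap.trace_eq_sum_inner, toEuclideanLin_eq_toLin_orthonormal, trace_toLin_eq]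

theorem trace_le_sum_norm_toEuclideanLin {k ι : Type*} [Fintype k] [DecidableEq k] [Fintype ι]
    (M : Matrix k k ℝ) (b : OrthonormalBasis ι ℝ (EuclideanSpace ℝ k)) :
    M.trace ≤ ∑ i, ‖toEuclideanLin M (b i)‖ := by
  rw [trace_eq_sum_inner_toEuclideanLin M b]
  exact Finset.sum_le_sum fun i _ => by
    simpa [b.norm_eq_one i] using real_inner_le_norm (b i) (toEuclideanLin M (b i))

theorem IsHermitian.toEuclideanLin_eigenvectorBasis {𝕜 k : Type*} [RCLike 𝕜] [Fintype k]
    [DecidableEq k] {A : Matrix k k 𝕜} (hA : A.IsHermitian) (j : k) :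
    toEuclideanLin A (hA.eigenvectorBasis j) = (hA.eigenvalues j : 𝕜) • hA.eigenvectorBasis j := by
  rw [toLpLin_apply, hA.mulVec_eigenvectorBasis, RCLike.real_smul_eq_coe_smul (K := 𝕜)]
  rfl

theorem isHermitian_transpose_mul_self {m n : Type*} [Fintype m] (A : Matrix m n ℝ) :
    (Aᵀ * A).IsHermitian := by
  simpa using isHermitian_conjTranspose_mul_self A

section SingularBasis

variable {m n : Type*} [Fintype m] [Fintype n] [DecidableEq m] [DecidableEq n]

noncomputable def rightSingularBasis (A : Matrix m n ℝ) :
    OrthonormalBasis n ℝ (EuclideanSpace ℝ n) :=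
  (isHermitian_transpose_mul_self A).eigenvectorBasis

theorem eigenvalues_transpose_mul_self_eq_norm_sq (A : Matrix m n ℝ) (i : n) :
    (isHermitian_transpose_mul_self A).eigenvalues i =
      ‖toEuclideanLin A (rightSingularBasis A i)‖ ^ 2 := by
  set b := rightSingularBasis A
  have hAA : toEuclideanLin (Aᵀ * A) (b i) =
      (isHermitian_transpose_mul_self A).eigenvalues i • b i :=
    (isHermitian_transpose_mul_self A).toEuclideanLin_eigenvectorBasis i
  rw [← real_inner_self_eq_norm_sq, ← LinearMap.adjoint_inner_right,
    ← toEuclideanLin_conjTranspose_eq_adjoint, conjTranspose_eq_transpose_of_trivial]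
  have hcomp : toEuclideanLin Aᵀ (toEuclideanLin A (b i)) = toEuclideanLin (Aᵀ * A) (b i) := by
    simp
  rw [hcomp, hAA, inner_smul_right, b.inner_eq_one, mul_one]

theorem toEuclideanLin_transpose_mul_self_rightSingularBasis (A : Matrix m n ℝ) (i : n) :
    toEuclideanLin (Aᵀ * A) (rightSingularBasis A i) =
      ‖toEuclideanLin A (rightSingularBasis A i)‖ ^ 2 • rightSingularBasis A i := by
  rw [← eigenvalues_transpose_mul_self_eq_norm_sq]
  exact (isHermitian_transpose_mul_self A).toEuclideanLin_eigenvectorBasis i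

theorem nuclearNorm_eq_sum_norm (A : Matrix m n ℝ) :
    nuclearNorm A = ∑ i, ‖toEuclideanLin A (rightSingularBasis A i)‖ := by
  refine Finset.sum_congr rfl fun i _ => ?_
  rw [← Real.sqrt_sq (norm_nonneg _), ← eigenvalues_transpose_mul_self_eq_norm_sq]

@[simp]
theorem nuclearNorm_zero : nuclearNorm (0 : Matrix m n ℝ) = 0 := by
  simp [nuclearNorm_eq_sum_norm]

end SingularBasis

end Matrix

namespace LinearMap.IsSymmetric

variable {𝕜 E : Type*} [RCLike 𝕜] [NormedAddCommGroup E] [InnerProductSpace 𝕜 E]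
  {T : E →ₗ[𝕜] E}

theorem norm_sq_apply_add_norm_sq_sub_apply (hT : T.IsSymmetric) (hT' : IsIdempotentElem T)
    (v : E) : ‖T v‖ ^ 2 + ‖v - T v‖ ^ 2 = ‖v‖ ^ 2 := by
  have horth : ⟪T v, v - T v⟫_𝕜 = 0 := by
    rw [hT, map_sub, ← Module.End.mul_apply, hT'.eq, sub_self, inner_zero_right]
  have := norm_add_sq_eq_norm_sq_add_norm_sq_of_inner_eq_zero _ _ horth
  rw [add_sub_cancel] at this
  rw [sq, sq, sq, this]

theorem norm_apply_le_of_isIdempotentElem (hT : T.IsSymmetric) (hT' : IsIdempotentElem T)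
    (v : E) : ‖T v‖ ≤ ‖v‖ := by
  refine (sq_le_sq₀ (norm_nonneg _) (norm_nonneg _)).mp ?_
  linarith [hT.norm_sq_apply_add_norm_sq_sub_apply hT' v, sq_nonneg ‖v - T v‖]

theorem apply_eq_self_of_norm_apply_eq (hT : T.IsSymmetric) (hT' : IsIdempotentElem T)
    {v : E} (h : ‖T v‖ = ‖v‖) : T v = v := by
  have := hT.norm_sq_apply_add_norm_sq_sub_apply hT' v
  rw [h, add_eq_left, sq_eq_zero_iff, norm_eq_zero, sub_eq_zero] at this
  exact this.symm

end LinearMap.IsSymmetric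

namespace IsStarProjection

variable {k : Type*} [Fintype k] {Q : Matrix k k ℝ}

theorem transpose_mul_self (hQ : IsStarProjection Q) : Qᵀ * Q = Q := by
  rw [← conjTranspose_eq_transpose_of_trivial, ← star_eq_conjTranspose, hQ.isSelfAdjoint.star_eq,
    hQ.isIdempotentElem.eq]

variable [DecidableEq k]

theorem isSymmetric_toEuclideanLin (hQ : IsStarProjection Q) : (toEuclideanLin Q).IsSymmetric :=
  isSymmetric_toEuclideanLin_iff.mpr hQ.isSelfAdjoint

theorem isIdempotentElem_toEuclideanLin (hQ : IsStarProjection Q) :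
    IsIdempotentElem (toEuclideanLin Q) := by
  rw [IsIdempotentElem, Module.End.mul_eq_comp, ← toLpLin_mul_same, hQ.isIdempotentElem.eq]

theorem norm_toEuclideanLin_mul_apply_le (hQ : IsStarProjection Q) (A : Matrix k k ℝ)
    (v : EuclideanSpace ℝ k) : ‖toEuclideanLin (Q * A) v‖ ≤ ‖toEuclideanLin A v‖ := by
  rw [toLpLin_mul_same, LinearMap.comp_apply]
  exact hQ.isSymmetric_toEuclideanLin.norm_apply_le_of_isIdempotentElem
    hQ.isIdempotentElem_toEuclideanLin _

theorem toEuclideanLin_mul_apply_eq_of_norm_eq (hQ : IsStarProjection Q) {A : Matrix k k ℝ}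
    {v : EuclideanSpace ℝ k} (h : ‖toEuclideanLin (Q * A) v‖ = ‖toEuclideanLin A v‖) :
    toEuclideanLin (Q * A) v = toEuclideanLin A v := by
  rw [toLpLin_mul_same, LinearMap.comp_apply] at h ⊢
  exact hQ.isSymmetric_toEuclideanLin.apply_eq_self_of_norm_apply_eq
    hQ.isIdempotentElem_toEuclideanLin h

theorem trace_mul_le_nuclearNorm (hQ : IsStarProjection Q) (A : Matrix k k ℝ) :
    (Q * A).trace ≤ nuclearNorm A := by
  rw [nuclearNorm_eq_sum_norm]
  exact (trace_le_sum_norm_toEuclideanLin _ _).trans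
    (Finset.sum_le_sum fun i _ => hQ.norm_toEuclideanLin_mul_apply_le A _)

theorem mul_eq_of_trace_mul_eq_nuclearNorm (hQ : IsStarProjection Q) {A : Matrix k k ℝ}
    (h : (Q * A).trace = nuclearNorm A) : Q * A = A := by
  set b := rightSingularBasis A
  have hnorm (i : k) := hQ.norm_toEuclideanLin_mul_apply_le A (b i)
  have hsum : ∑ i, ‖toEuclideanLin (Q * A) (b i)‖ = ∑ i, ‖toEuclideanLin A (b i)‖ := by
    refine le_antisymm (Finset.sum_le_sum fun i _ => hnorm i) ?_
    rw [← nuclearNorm_eq_sum_norm, ← h]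
    exact trace_le_sum_norm_toEuclideanLin _ b
  have hbasis (i : k) : toEuclideanLin (Q * A) (b i) = toEuclideanLin A (b i) :=
    hQ.toEuclideanLin_mul_apply_eq_of_norm_eq
      ((Finset.sum_eq_sum_iff_of_le fun i _ => hnorm i).mp hsum i (Finset.mem_univ i))
  exact toEuclideanLin.injective (b.toBasis.ext fun i => by simpa using hbasis i)

theorem nuclearNorm_eq_trace (hQ : IsStarProjection Q) : nuclearNorm Q = Q.trace := by
  set b := rightSingularBasis Q
  rw [trace_eq_sum_inner_toEuclideanLin _ b, nuclearNorm_eq_sum_norm]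
  refine Finset.sum_congr rfl fun i _ => ?_
  -- `‖Q bᵢ‖ = ‖Q bᵢ‖ ^ 2 = ⟪bᵢ, Q bᵢ⟫` because `bᵢ` is an eigenvector of `Qᵀ * Q = Q`.
  have heig : toEuclideanLin Q (b i) = ‖toEuclideanLin Q (b i)‖ ^ 2 • b i := by
    rw [← toEuclideanLin_transpose_mul_self_rightSingularBasis, hQ.transpose_mul_self]
  have hnorm := congrArg norm heig
  rw [norm_smul, b.norm_eq_one, mul_one, Real.norm_of_nonneg (sq_nonneg _)] at hnorm
  rw [hnorm]
  conv_rhs => rw [heig]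
  rw [inner_smul_right, b.inner_eq_one, mul_one]

end IsStarProjection

namespace IsMoorePenroseInv

variable {m n : Type*} [Fintype m] [Fintype n] {X : Matrix m n ℝ} {P : Matrix n m ℝ}

theorem mul_inv_mul_eq (hP : IsMoorePenroseInv X P) : X * (P * X) = X := by
  rw [← Matrix.mul_assoc, hP.1]

theorem isStarProjection_inv_mul (hP : IsMoorePenroseInv X P) : IsStarProjection (P * X) where
  isIdempotentElem := by rw [IsIdempotentElem, ← Matrix.mul_assoc, hP.2.1]
  isSelfAdjoint := by
    rw [IsSelfAdjoint, star_eq_conjTranspose, conjTranspose_eq_transpose_of_trivial, hP.2.2.2]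

theorem isStarProjection_mul_inv (hP : IsMoorePenroseInv X P) : IsStarProjection (X * P) where
  isIdempotentElem := by rw [IsIdempotentElem, ← Matrix.mul_assoc, hP.1]
  isSelfAdjoint := by
    rw [IsSelfAdjoint, star_eq_conjTranspose, conjTranspose_eq_transpose_of_trivial, hP.2.2.1]

variable [DecidableEq n]

theorem nuclearNorm_inv_mul_lt (hP : IsMoorePenroseInv X P) {Z : Matrix n n ℝ}
    (h : X = X * Z) (hZ : Z ≠ P * X) : nuclearNorm (P * X) < nuclearNorm Z := by
  have hQ := hP.isStarProjection_inv_mul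
  have htrace : (P * X * Z).trace = nuclearNorm (P * X) := by
    rw [Matrix.mul_assoc, ← h, hQ.nuclearNorm_eq_trace]
  refine (htrace ▸ hQ.trace_mul_le_nuclearNorm Z).lt_of_ne fun heq => hZ ?_
  rw [← hQ.mul_eq_of_trace_mul_eq_nuclearNorm (htrace.trans heq), Matrix.mul_assoc, ← h]

variable [DecidableEq m]

theorem nuclearNorm_inv_mul_le (hP : IsMoorePenroseInv X P) {Z : Matrix n n ℝ}
    {L : Matrix m m ℝ} (h : X = X * Z + L * X) :
    nuclearNorm (P * X) ≤ nuclearNorm Z + nuclearNorm L :=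
  calc nuclearNorm (P * X) = (P * X).trace := hP.isStarProjection_inv_mul.nuclearNorm_eq_trace
    _ = (P * X * Z).trace + (X * P * L).trace := by
      conv_lhs => rw [h]
      rw [Matrix.mul_add, trace_add, ← Matrix.mul_assoc, ← Matrix.mul_assoc, trace_mul_cycle P L X]
    _ ≤ nuclearNorm Z + nuclearNorm L :=
      add_le_add (hP.isStarProjection_inv_mul.trace_mul_le_nuclearNorm Z)
        (hP.isStarProjection_mul_inv.trace_mul_le_nuclearNorm L)

end IsMoorePenroseInv

theorem stmt18_general {m n : ℕ} (X : Matrix (Fin m) (Fin n) ℝ)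
    (P : Matrix (Fin n) (Fin m) ℝ) (hP : IsMoorePenroseInv X P) :
    -- (X† X, 0) is optimal for the original (rank) LatLRR problem
    (X = X * (P * X) + (0 : Matrix (Fin m) (Fin m) ℝ) * X ∧
      ∀ (Z : Matrix (Fin n) (Fin n) ℝ) (L : Matrix (Fin m) (Fin m) ℝ),
        X = X * Z + L * X →
          (P * X).rank + (0 : Matrix (Fin m) (Fin m) ℝ).rank ≤ Z.rank + L.rank) ∧
    -- (X† X, 0) is optimal for the heuristic LatLRR problem
    (∀ (Z : Matrix (Fin n) (Fin n) ℝ) (L : Matrix (Fin m) (Fin m) ℝ),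
        X = X * Z + L * X →
          nuclearNorm (P * X) + nuclearNorm (0 : Matrix (Fin m) (Fin m) ℝ)
            ≤ nuclearNorm Z + nuclearNorm L) ∧
    -- X† X is the unique optimal solution of the heuristic LRR problem
    (X = X * (P * X) ∧
      ∀ Z : Matrix (Fin n) (Fin n) ℝ, X = X * Z → Z ≠ P * X →
        nuclearNorm (P * X) < nuclearNorm Z) ∧
    -- solutions of the original LRR problem give solutions of the original LatLRR problem
    (∀ Z : Matrix (Fin n) (Fin n) ℝ,
      (X = X * Z ∧ ∀ Z' : Matrix (Fin n) (Fin n) ℝ, X = X * Z' → Z.rank ≤ Z'.rank) →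
      (X = X * Z + (0 : Matrix (Fin m) (Fin m) ℝ) * X ∧
        ∀ (Z' : Matrix (Fin n) (Fin n) ℝ) (L' : Matrix (Fin m) (Fin m) ℝ),
          X = X * Z' + L' * X →
            Z.rank + (0 : Matrix (Fin m) (Fin m) ℝ).rank ≤ Z'.rank + L'.rank)) ∧
    -- solutions of the heuristic LRR problem give solutions of the heuristic LatLRR problem
    (∀ Z : Matrix (Fin n) (Fin n) ℝ,
      (X = X * Z ∧ ∀ Z' : Matrix (Fin n) (Fin n) ℝ, X = X * Z' →
          nuclearNorm Z ≤ nuclearNorm Z') →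
      (X = X * Z + (0 : Matrix (Fin m) (Fin m) ℝ) * X ∧
        ∀ (Z' : Matrix (Fin n) (Fin n) ℝ) (L' : Matrix (Fin m) (Fin m) ℝ),
          X = X * Z' + L' * X →
            nuclearNorm Z + nuclearNorm (0 : Matrix (Fin m) (Fin m) ℝ)
              ≤ nuclearNorm Z' + nuclearNorm L')) := by
  have hLRR : X = X * (P * X) := hP.mul_inv_mul_eq.symm
  have hrank {Z : Matrix (Fin n) (Fin n) ℝ} {L : Matrix (Fin m) (Fin m) ℝ}
      (h : X = X * Z + L * X) : (P * X).rank ≤ Z.rank + L.rank :=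
    (rank_mul_le_right P X).trans (rank_le_add_of_eq_mul_add_mul h)
  simp only [Matrix.zero_mul, add_zero, rank_zero, nuclearNorm_zero]
  refine ⟨⟨hLRR, fun _ _ => hrank⟩, fun _ _ => hP.nuclearNorm_inv_mul_le,
    ⟨hLRR, fun _ => hP.nuclearNorm_inv_mul_lt⟩, ?_, ?_⟩
  · rintro Z ⟨hZ, hmin⟩
    exact ⟨hZ, fun _ _ h => (hmin _ hLRR).trans (hrank h)⟩
  · rintro Z ⟨hZ, hmin⟩
    exact ⟨hZ, fun _ _ h => (hmin _ hLRR).trans (hP.nuclearNorm_inv_mul_le h)⟩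

/-- `(X† X, 0)` is optimal simultaneously for the original and the heuristic LatLRR
problems; `X† X` is the unique minimizer of the heuristic LRR problem; and every
optimal solution `Z` of LRR (rank or nuclear norm version) yields an optimal
solution `(Z, 0)` of the corresponding LatLRR problem. -/
theorem stmt18 {m n : ℕ} (X : Matrix (Fin m) (Fin n) ℝ) (hX : X ≠ 0)
    (P : Matrix (Fin n) (Fin m) ℝ) (hP : IsMoorePenroseInv X P) :
    -- (X† X, 0) is optimal for the original (rank) LatLRR problem
    (X = X * (P * X) + (0 : Matrix (Fin m) (Fin m) ℝ) * X ∧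
      ∀ (Z : Matrix (Fin n) (Fin n) ℝ) (L : Matrix (Fin m) (Fin m) ℝ),
        X = X * Z + L * X →
          (P * X).rank + (0 : Matrix (Fin m) (Fin m) ℝ).rank ≤ Z.rank + L.rank) ∧
    -- (X† X, 0) is optimal for the heuristic LatLRR problem
    (∀ (Z : Matrix (Fin n) (Fin n) ℝ) (L : Matrix (Fin m) (Fin m) ℝ),
        X = X * Z + L * X →
          nuclearNorm (P * X) + nuclearNorm (0 : Matrix (Fin m) (Fin m) ℝ)
            ≤ nuclearNorm Z + nuclearNorm L) ∧
    -- X† X is the unique optimal solution of the heuristic LRR problem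
    (X = X * (P * X) ∧
      ∀ Z : Matrix (Fin n) (Fin n) ℝ, X = X * Z → Z ≠ P * X →
        nuclearNorm (P * X) < nuclearNorm Z) ∧
    -- solutions of the original LRR problem give solutions of the original LatLRR problem
    (∀ Z : Matrix (Fin n) (Fin n) ℝ,
      (X = X * Z ∧ ∀ Z' : Matrix (Fin n) (Fin n) ℝ, X = X * Z' → Z.rank ≤ Z'.rank) →
      (X = X * Z + (0 : Matrix (Fin m) (Fin m) ℝ) * X ∧
        ∀ (Z' : Matrix (Fin n) (Fin n) ℝ) (L' : Matrix (Fin m) (Fin m) ℝ),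
          X = X * Z' + L' * X →
            Z.rank + (0 : Matrix (Fin m) (Fin m) ℝ).rank ≤ Z'.rank + L'.rank)) ∧
    -- solutions of the heuristic LRR problem give solutions of the heuristic LatLRR problem
    (∀ Z : Matrix (Fin n) (Fin n) ℝ,
      (X = X * Z ∧ ∀ Z' : Matrix (Fin n) (Fin n) ℝ, X = X * Z' →
          nuclearNorm Z ≤ nuclearNorm Z') →
      (X = X * Z + (0 : Matrix (Fin m) (Fin m) ℝ) * X ∧
        ∀ (Z' : Matrix (Fin n) (Fin n) ℝ) (L' : Matrix (Fin m) (Fin m) ℝ),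
          X = X * Z' + L' * X →
            nuclearNorm Z + nuclearNorm (0 : Matrix (Fin m) (Fin m) ℝ)
              ≤ nuclearNorm Z' + nuclearNorm L')) :=
  stmt18_general X P hP
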